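/- Let x ∈ ⋀^k(ℝ^{2n}) be a k-form with k ≤ n. (i) If L^{n−k+s} x = 0 for some integer s ≥ 1, then x = Σ_{0 ≤ j ≤ s−1} L^j x_j where each x_j ∈ ⋀^{k−2j}(ℝ^{2n}) is primitive. (ii) x is primitive (Λx = 0) if and only if L^{n−k+1} x = 0. -/

import Mathlib

open scoped BigOperators

noncomputable section

/-- The exterior algebra `⋀(ℝ^{2n})`, represented concretely: an element is given by its
coordinates in the basis of wedge monomials indexed by subsets of `Fin (2*n)`
(the first `n` basis indices correspond to `dx_1, …, dx_n`, the last `n` to `dξ_1, …, dξ_n`). -/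
abbrev SForm (n : ℕ) := Finset (Fin (2 * n)) → ℝ

/-- The inner product making the wedge monomials an orthonormal basis. -/
def sip {n : ℕ} (x y : SForm n) : ℝ := ∑ s : Finset (Fin (2 * n)), x s * y s

/-- The wedge product, written in coordinates over the monomial basis; the sign
counts the inversions between the two index sets. -/
def wedge {n : ℕ} (x y : SForm n) : SForm n := fun s =>
  ∑ a ∈ s.powerset,
    (-1 : ℝ) ^ (((a ×ˢ (s \ a)).filter fun q => q.2 < q.1).card) * x a * y (s \ a)

/-- `x` is a `k`-form: it is supported on monomials of degree `k`. -/
def IsForm {n : ℕ} (k : ℕ) (x : SForm n) : Prop := ∀ s, x s ≠ 0 → s.card = k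

/-- Index of `dx_i` among the `2n` basis vectors. -/
def dxI (n : ℕ) (i : Fin n) : Fin (2 * n) := ⟨i.1, by have := i.2; omega⟩

/-- Index of `dξ_i` among the `2n` basis vectors. -/
def dxiI (n : ℕ) (i : Fin n) : Fin (2 * n) := ⟨n + i.1, by have := i.2; omega⟩

/-- The basic one-form `dx_i`. -/
def sDx (n : ℕ) (i : Fin n) : SForm n := fun s => if s = {dxI n i} then 1 else 0

/-- The basic one-form `dξ_i`. -/
def sDxi (n : ℕ) (i : Fin n) : SForm n := fun s => if s = {dxiI n i} then 1 else 0

/-- The unit `1` of the exterior algebra. -/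
def sOne (n : ℕ) : SForm n := fun s => if s = ∅ then 1 else 0

/-- The standard Kähler form `ω = Σ_i dx_i ∧ dξ_i`. -/
def omegaF (n : ℕ) : SForm n := ∑ i : Fin n, wedge (sDx n i) (sDxi n i)

/-- The Lefschetz operator `L = ω ∧ ·`. -/
def Lop (n : ℕ) (x : SForm n) : SForm n := wedge (omegaF n) x

/-- The iterate `L^m`. -/
def Lpow (n : ℕ) (m : ℕ) (x : SForm n) : SForm n := (Lop n)^[m] x

/-- The power `ω^m`. -/
def omegaPow (n : ℕ) (m : ℕ) : SForm n := Lpow n m (sOne n)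

/-- `ω_n = ω^n / n!`, the volume form. -/
def omegaTop (n : ℕ) : SForm n := ((n.factorial : ℝ))⁻¹ • omegaPow n n

/-!
Split `ω` into the `n` planes `dx_i ∧ dξ_i`: then `L = Σ L_i` and its adjoint is `Λ = Σ Λ_i`,
where `Λ_i` removes the plane. Operators of different planes commute, while `Λ_i L_i - L_i Λ_i`
multiplies a monomial by `1`, `0` or `-1` according as it meets the plane in `0`, `1` or `2`
indices; summing, `ΛL - LΛ = n - p` on `p`-forms. For a primitive `p`-form `u` this gives
`Λ L^{m+1} u = (m+1)(n-p-m) L^m u`, so `L^m u` vanishes exactly from `m = n - p + 1` on (if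
`u ≠ 0`), and `L^a u ⊥ L^b v` for primitive `u, v` and `a ≠ b`.
The orthogonal complement of `L(⋀^k)` in `⋀^{k+2}` consists of primitive forms, which by
induction gives a decomposition `x = Σ_j L^j x_j` into primitive `x_j`. If `L^{n-k+s} x = 0`,
orthogonality forces each `L^{n-k+s+j} x_j` to vanish, which kills `x_j` for `j ≥ s`.
-/

open Finset

theorem Finset.sum_mul_sum_sub_sum_mul_sum_of_commute {R ι : Type*} [Ring R] (s : Finset ι)
    (a b : ι → R) (h : ∀ i ∈ s, ∀ j ∈ s, i ≠ j → Commute (a i) (b j)) :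
    (∑ i ∈ s, a i) * (∑ i ∈ s, b i) - (∑ i ∈ s, b i) * (∑ i ∈ s, a i)
      = ∑ i ∈ s, (a i * b i - b i * a i) := by
  rw [Finset.sum_mul_sum, Finset.sum_mul_sum, Finset.sum_comm (s := s) (t := s),
    ← Finset.sum_sub_distrib]
  refine Finset.sum_congr rfl fun i hi => ?_
  rw [← Finset.sum_sub_distrib]
  exact Finset.sum_eq_single_of_mem i hi fun j hj hji => sub_eq_zero.2 (h j hj i hi hji).eq

namespace SForm

variable {n : ℕ}

def pair (n : ℕ) (i : Fin n) : Finset (Fin (2 * n)) := {dxI n i, dxiI n i}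

lemma dxI_ne_dxiI (i : Fin n) : dxI n i ≠ dxiI n i := by
  simp only [dxI, dxiI, ne_eq, Fin.mk.injEq]; omega

lemma card_pair (i : Fin n) : #(pair n i) = 2 := Finset.card_pair (dxI_ne_dxiI i)

lemma disjoint_pair {i j : Fin n} (hij : i ≠ j) : Disjoint (pair n i) (pair n j) := by
  have := Fin.val_ne_of_ne hij
  simp only [pair, disjoint_insert_left, disjoint_insert_right, disjoint_singleton_left,
    mem_insert, mem_singleton, dxI, dxiI, Fin.mk.injEq]
  omega

lemma exists_mem_pair (b : Fin (2 * n)) : ∃ i, b ∈ pair n i := by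
  by_cases hb : b.1 < n
  · exact ⟨⟨b, hb⟩, by simp [pair, dxI]⟩
  · refine ⟨⟨b - n, by omega⟩, ?_⟩
    simp only [pair, mem_insert, mem_singleton, dxiI, Fin.ext_iff]
    omega

lemma sum_card_pair_inter (s : Finset (Fin (2 * n))) : ∑ i, #(pair n i ∩ s) = #s := by
  rw [← card_biUnion fun i _ j _ hij =>
    (disjoint_pair hij).mono inter_subset_left inter_subset_left]
  congr 1
  ext b
  simpa using fun _ => exists_mem_pair b

lemma indicator_disjoint_sub_indicator_subset (i : Fin n) (s : Finset (Fin (2 * n))) :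
    ((if Disjoint (pair n i) s then 1 else 0 : ℝ) - if pair n i ⊆ s then 1 else 0)
      = 1 - #(pair n i ∩ s) := by
  rw [← filter_mem_eq_inter, card_filter, pair, sum_pair (dxI_ne_dxiI i)]
  simp only [disjoint_insert_left, disjoint_singleton_left, insert_subset_iff,
    singleton_subset_iff]
  by_cases ha : dxI n i ∈ s <;> by_cases hb : dxiI n i ∈ s <;> norm_num [ha, hb]

lemma sum_indicator_disjoint_sub_indicator_subset (s : Finset (Fin (2 * n))) :
    ∑ i, ((if Disjoint (pair n i) s then 1 else 0 : ℝ) - if pair n i ⊆ s then 1 else 0)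
      = n - #s := by
  simp only [indicator_disjoint_sub_indicator_subset, sum_sub_distrib, sum_const, card_univ,
    Fintype.card_fin, nsmul_eq_mul, mul_one]
  rw [← Nat.cast_sum, sum_card_pair_inter]

/-- For `t` disjoint from `pair n i`, `dx_i ∧ dξ_i ∧ e_t = pairSign n i t • e_{t ∪ pair n i}`. -/
def pairSign (n : ℕ) (i : Fin n) (t : Finset (Fin (2 * n))) : ℝ :=
  (-1) ^ (#{b ∈ t | b < dxI n i} + #{b ∈ t | b < dxiI n i})

lemma pairSign_union {i : Fin n} {t u : Finset (Fin (2 * n))} (h : Disjoint t u) :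
    pairSign n i (t ∪ u) = pairSign n i t * pairSign n i u := by
  simp only [pairSign, filter_union, card_union_of_disjoint (disjoint_filter_filter h),
    ← pow_add]
  ring_nf

lemma pairSign_mul_self (i : Fin n) (t : Finset (Fin (2 * n))) :
    pairSign n i t * pairSign n i t = 1 := by
  rw [pairSign, ← mul_pow]; norm_num

lemma pairSign_pair (i j : Fin n) : pairSign n i (pair n j) = -1 := by
  have hexp : #{b ∈ pair n j | b < dxI n i} + #{b ∈ pair n j | b < dxiI n i}
      = 2 * (if j < i then 1 else 0) + 1 := by
    rw [card_filter, card_filter, pair, sum_pair (dxI_ne_dxiI j), sum_pair (dxI_ne_dxiI j)]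
    simp only [dxI, dxiI, Fin.mk_lt_mk]
    split_ifs <;> omega
  rw [pairSign, hexp, pow_succ, pow_mul]; norm_num

lemma card_inversions_pair (i : Fin n) (t : Finset (Fin (2 * n))) :
    #{q ∈ pair n i ×ˢ t | q.2 < q.1} = #{b ∈ t | b < dxI n i} + #{b ∈ t | b < dxiI n i} := by
  rw [card_filter, sum_product, pair, sum_pair (dxI_ne_dxiI i), ← card_filter, ← card_filter]

lemma wedge_single_left (a : Finset (Fin (2 * n))) (c : ℝ) (y : SForm n)
    (s : Finset (Fin (2 * n))) :
    wedge (Pi.single a c) y s =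
      if a ⊆ s then (-1) ^ #{q ∈ a ×ˢ (s \ a) | q.2 < q.1} * c * y (s \ a) else 0 := by
  simp only [wedge, Pi.single_apply, mul_ite, ite_mul, mul_zero, zero_mul, sum_ite_eq',
    mem_powerset]

lemma wedge_sum_left {ι : Type*} (t : Finset ι) (f : ι → SForm n) (y : SForm n) :
    wedge (∑ i ∈ t, f i) y = ∑ i ∈ t, wedge (f i) y := by
  ext s
  simp only [wedge, Finset.sum_apply, Finset.mul_sum, Finset.sum_mul]
  exact Finset.sum_comm

lemma wedge_sDx_sDxi (i : Fin n) : wedge (sDx n i) (sDxi n i) = Pi.single (pair n i) 1 := by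
  have hdx : sDx n i = Pi.single {dxI n i} 1 := by
    ext s; simp [sDx, Pi.single_apply]
  ext s
  rw [hdx, wedge_single_left, Pi.single_apply]
  by_cases hs : s = pair n i
  · subst hs
    have hsd : pair n i \ {dxI n i} = {dxiI n i} := by
      rw [sdiff_singleton_eq_erase, pair, erase_insert (by simpa using dxI_ne_dxiI i)]
    have hinv : #{q ∈ ({dxI n i} : Finset _) ×ˢ {dxiI n i} | q.2 < q.1} = 0 := by
      rw [singleton_product_singleton, card_filter, sum_singleton, if_neg]
      simp only [dxI, dxiI, Fin.mk_lt_mk, not_lt]; omega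
    rw [if_pos (singleton_subset_iff.2 (by simp [pair])), hsd, hinv, if_pos rfl]
    simp [sDxi]
  · rw [if_neg hs, ite_eq_right_iff]
    intro hsub
    simp only [sDxi, mul_ite, mul_one, mul_zero, ite_eq_right_iff]
    intro hsd
    refine absurd ?_ hs
    rw [← insert_erase (singleton_subset_iff.1 hsub), ← sdiff_singleton_eq_erase, hsd]
    rfl

/-- `Lpair n i` is `dx_i ∧ dξ_i ∧ ·` and `Lampair n i` its adjoint. -/
def Lpair (n : ℕ) (i : Fin n) : Module.End ℝ (SForm n) where
  toFun x s := if pair n i ⊆ s then pairSign n i (s \ pair n i) * x (s \ pair n i) else 0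
  map_add' x y := by ext s; split_ifs <;> simp [*, mul_add]
  map_smul' c x := by ext s; split_ifs <;> simp [*, mul_left_comm]

def Lampair (n : ℕ) (i : Fin n) : Module.End ℝ (SForm n) where
  toFun y s := if Disjoint (pair n i) s then pairSign n i s * y (s ∪ pair n i) else 0
  map_add' x y := by ext s; split_ifs <;> simp [*, mul_add]
  map_smul' c x := by ext s; split_ifs <;> simp [*, mul_left_comm]

lemma Lpair_apply (i : Fin n) (x : SForm n) (s : Finset (Fin (2 * n))) :
    Lpair n i x s =
      if pair n i ⊆ s then pairSign n i (s \ pair n i) * x (s \ pair n i) else 0 := rfl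

lemma Lampair_apply (i : Fin n) (y : SForm n) (s : Finset (Fin (2 * n))) :
    Lampair n i y s =
      if Disjoint (pair n i) s then pairSign n i s * y (s ∪ pair n i) else 0 := rfl

lemma wedge_wedge_sDx_sDxi (i : Fin n) (x : SForm n) :
    wedge (wedge (sDx n i) (sDxi n i)) x = Lpair n i x := by
  ext s
  rw [wedge_sDx_sDxi, wedge_single_left, card_inversions_pair, Lpair_apply, ← pairSign, mul_one]

lemma sip_Lpair (i : Fin n) (x y : SForm n) : sip (Lpair n i x) y = sip x (Lampair n i y) := by
  simp only [sip, Lpair_apply, Lampair_apply, ite_mul, mul_ite, zero_mul, mul_zero,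
    ← sum_filter]
  refine sum_nbij' (· \ pair n i) (· ∪ pair n i) ?_ ?_ ?_ ?_ ?_
  · simp [disjoint_sdiff]
  · simp
  · intro t ht
    exact sdiff_union_of_subset (mem_filter.1 ht).2
  · intro t ht
    exact union_sdiff_cancel_right (mem_filter.1 ht).2.symm
  · intro t ht
    rw [sdiff_union_of_subset (mem_filter.1 ht).2]
    ring

lemma Lampair_mul_Lpair_of_ne {i j : Fin n} (hij : i ≠ j) :
    Lampair n i * Lpair n j = Lpair n j * Lampair n i := by
  have hP : Disjoint (pair n i) (pair n j) := disjoint_pair hij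
  refine LinearMap.ext fun x => funext fun s => ?_
  simp only [Module.End.mul_apply, Lampair_apply, Lpair_apply]
  by_cases hjs : pair n j ⊆ s
  · obtain ⟨t, htj, rfl⟩ : ∃ t, Disjoint t (pair n j) ∧ s = t ∪ pair n j :=
      ⟨s \ pair n j, sdiff_disjoint, (sdiff_union_of_subset hjs).symm⟩
    have hsd : (t ∪ pair n j ∪ pair n i) \ pair n j = t ∪ pair n i := by
      rw [union_right_comm, union_sdiff_cancel_right (disjoint_union_left.2 ⟨htj, hP⟩)]
    rw [if_pos (subset_union_right.trans subset_union_left), if_pos subset_union_right, hsd,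
      union_sdiff_cancel_right htj]
    by_cases hit : Disjoint (pair n i) t
    · rw [if_pos (disjoint_union_right.2 ⟨hit, hP⟩), if_pos hit, pairSign_union htj,
        pairSign_union hit.symm, pairSign_pair, pairSign_pair]
      ring
    · rw [if_neg fun h => hit (disjoint_union_right.1 h).1, if_neg hit, mul_zero]
  · have hjs' : ¬ pair n j ⊆ s ∪ pair n i := fun h =>
      hjs (Disjoint.left_le_of_le_sup_right h hP.symm)
    simp [hjs, hjs']

lemma Lampair_Lpair_apply (i : Fin n) (x : SForm n) (s : Finset (Fin (2 * n))) :
    Lampair n i (Lpair n i x) s = if Disjoint (pair n i) s then x s else 0 := by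
  simp only [Lampair_apply, Lpair_apply]
  by_cases hd : Disjoint (pair n i) s
  · rw [if_pos hd, if_pos hd, if_pos subset_union_right, union_sdiff_cancel_right hd.symm,
      ← mul_assoc, pairSign_mul_self, one_mul]
  · rw [if_neg hd, if_neg hd]

lemma Lpair_Lampair_apply (i : Fin n) (x : SForm n) (s : Finset (Fin (2 * n))) :
    Lpair n i (Lampair n i x) s = if pair n i ⊆ s then x s else 0 := by
  simp only [Lampair_apply, Lpair_apply]
  by_cases hs : pair n i ⊆ s
  · rw [if_pos hs, if_pos hs, if_pos disjoint_sdiff, sdiff_union_of_subset hs, ← mul_assoc,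
      pairSign_mul_self, one_mul]
  · rw [if_neg hs, if_neg hs]

lemma Lampair_Lpair_sub_Lpair_Lampair_apply (i : Fin n) (x : SForm n)
    (s : Finset (Fin (2 * n))) :
    (Lampair n i * Lpair n i - Lpair n i * Lampair n i) x s =
      ((if Disjoint (pair n i) s then 1 else 0) - if pair n i ⊆ s then 1 else 0) * x s := by
  rw [LinearMap.sub_apply, Module.End.mul_apply, Module.End.mul_apply, Pi.sub_apply,
    Lampair_Lpair_apply, Lpair_Lampair_apply]
  split_ifs <;> ring

def lefschetz (n : ℕ) : Module.End ℝ (SForm n) := ∑ i, Lpair n i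

def dualLefschetz (n : ℕ) : Module.End ℝ (SForm n) := ∑ i, Lampair n i

lemma sip_eq_dotProduct (x y : SForm n) : sip x y = x ⬝ᵥ y := rfl

lemma Lop_eq_lefschetz : Lop n = lefschetz n := by
  funext x
  rw [Lop, omegaF, wedge_sum_left, lefschetz, LinearMap.sum_apply]
  exact sum_congr rfl fun i _ => wedge_wedge_sDx_sDxi i x

lemma Lpow_eq_lefschetz_pow (m : ℕ) : Lpow n m = ⇑(lefschetz n ^ m) := by
  funext x
  rw [Lpow, Module.End.pow_apply, Lop_eq_lefschetz]

lemma sip_lefschetz (x y : SForm n) : sip (lefschetz n x) y = sip x (dualLefschetz n y) := by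
  rw [sip_eq_dotProduct, sip_eq_dotProduct, lefschetz, dualLefschetz, LinearMap.sum_apply,
    LinearMap.sum_apply, sum_dotProduct, dotProduct_sum]
  exact sum_congr rfl fun i _ => sip_Lpair i x y

lemma eq_dualLefschetz {Lam : SForm n → SForm n}
    (hLam : ∀ x y : SForm n, sip (Lop n x) y = sip x (Lam y)) : Lam = dualLefschetz n := by
  funext y s
  have h := hLam (Pi.single s 1) y
  rwa [Lop_eq_lefschetz, sip_lefschetz, sip_eq_dotProduct, sip_eq_dotProduct, single_dotProduct,
    single_dotProduct, one_mul, one_mul, eq_comm] at h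

lemma dualLefschetz_mul_lefschetz_sub_apply (x : SForm n) (s : Finset (Fin (2 * n))) :
    (dualLefschetz n * lefschetz n - lefschetz n * dualLefschetz n) x s = (n - #s) * x s := by
  rw [dualLefschetz, lefschetz, Finset.sum_mul_sum_sub_sum_mul_sum_of_commute _ _ _
      fun i _ j _ hij => Lampair_mul_Lpair_of_ne hij, LinearMap.sum_apply, Finset.sum_apply]
  simp only [Lampair_Lpair_sub_Lpair_Lampair_apply, ← sum_mul,
    sum_indicator_disjoint_sub_indicator_subset]

def forms (n k : ℕ) : Submodule ℝ (SForm n) where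
  carrier := {x | IsForm k x}
  add_mem' {x _} hx hy s hs := by
    by_cases h : x s = 0
    · exact hy s (by simpa [h] using hs)
    · exact hx s h
  zero_mem' _ hs := absurd rfl hs
  smul_mem' _ _ hx s hs := hx s (right_ne_zero_of_mul hs)

lemma isForm_lefschetz {p : ℕ} {x : SForm n} (hx : IsForm p x) :
    IsForm (p + 2) (lefschetz n x) := by
  rw [lefschetz, LinearMap.sum_apply]
  refine (forms n (p + 2)).sum_mem fun i _ s hs => ?_
  rw [Lpair_apply, ite_ne_right_iff] at hs
  obtain ⟨hsub, hs⟩ := hs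
  have h := hx _ (right_ne_zero_of_mul hs)
  have h2 := card_le_card hsub
  rw [card_sdiff_of_subset hsub, card_pair] at h
  rw [card_pair] at h2
  omega

lemma isForm_lefschetz_pow {p : ℕ} {x : SForm n} (hx : IsForm p x) (m : ℕ) :
    IsForm (p + 2 * m) ((lefschetz n ^ m) x) := by
  induction m with
  | zero => simpa using hx
  | succ m ih => rw [pow_succ', Module.End.mul_apply]; exact isForm_lefschetz ih

lemma card_add_two_of_dualLefschetz_ne_zero {p : ℕ} {y : SForm n} (hy : IsForm p y)
    {s : Finset (Fin (2 * n))} (hs : dualLefschetz n y s ≠ 0) : #s + 2 = p := by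
  rw [dualLefschetz, LinearMap.sum_apply, Finset.sum_apply] at hs
  obtain ⟨i, -, hi⟩ := exists_ne_zero_of_sum_ne_zero hs
  rw [Lampair_apply, ite_ne_right_iff] at hi
  obtain ⟨hd, hi⟩ := hi
  rw [← hy _ (right_ne_zero_of_mul hi), card_union_of_disjoint hd.symm, card_pair]

lemma isForm_dualLefschetz {p : ℕ} {y : SForm n} (hy : IsForm (p + 2) y) :
    IsForm p (dualLefschetz n y) := fun _ hs => by
  have := card_add_two_of_dualLefschetz_ne_zero hy hs
  omega

lemma dualLefschetz_eq_zero_of_lt_two {p : ℕ} {y : SForm n} (hy : IsForm p y) (hp : p < 2) :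
    dualLefschetz n y = 0 := by
  funext s
  by_contra hs
  have := card_add_two_of_dualLefschetz_ne_zero hy hs
  omega

lemma eq_zero_of_isForm_of_lt {k : ℕ} {x : SForm n} (hx : IsForm k x) (hk : 2 * n < k) :
    x = 0 := by
  funext s
  by_contra hs
  have := hx s hs ▸ card_le_univ s
  simp only [Fintype.card_fin] at this
  omega

lemma dualLefschetz_lefschetz_of_isForm {p : ℕ} {x : SForm n} (hx : IsForm p x) :
    dualLefschetz n (lefschetz n x) = lefschetz n (dualLefschetz n x) + ((n : ℝ) - p) • x := by
  funext s
  have h := dualLefschetz_mul_lefschetz_sub_apply x s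
  rw [LinearMap.sub_apply, Module.End.mul_apply, Module.End.mul_apply, Pi.sub_apply,
    sub_eq_iff_eq_add'] at h
  rw [h, Pi.add_apply, Pi.smul_apply, smul_eq_mul]
  by_cases hs : x s = 0
  · simp [hs]
  · rw [hx s hs]

lemma dualLefschetz_lefschetz_pow_succ {p : ℕ} {x : SForm n} (hx : IsForm p x)
    (hprim : dualLefschetz n x = 0) (m : ℕ) :
    dualLefschetz n ((lefschetz n ^ (m + 1)) x) =
      (((m : ℝ) + 1) * (n - p - m)) • (lefschetz n ^ m) x := by
  induction m with
  | zero => simp [dualLefschetz_lefschetz_of_isForm hx, hprim]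
  | succ m ih =>
    rw [pow_succ', Module.End.mul_apply,
      dualLefschetz_lefschetz_of_isForm (isForm_lefschetz_pow hx (m + 1)), ih, map_smul,
      ← Module.End.mul_apply, ← pow_succ', ← add_smul]
    congr 1
    push_cast
    ring

lemma lefschetz_pow_eq_zero_of_succ {p m : ℕ} {x : SForm n} (hx : IsForm p x)
    (hprim : dualLefschetz n x = 0) (hm : (m : ℝ) ≠ n - p)
    (h : (lefschetz n ^ (m + 1)) x = 0) : (lefschetz n ^ m) x = 0 := by
  have key := dualLefschetz_lefschetz_pow_succ hx hprim m
  rw [h, map_zero, eq_comm, smul_eq_zero] at key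
  exact key.resolve_left (mul_ne_zero (by positivity) (sub_ne_zero.2 hm.symm))

lemma lefschetz_pow_sub_add_one_eq_zero {p : ℕ} {x : SForm n} (hx : IsForm p x)
    (hprim : dualLefschetz n x = 0) (hp : p ≤ n) : (lefschetz n ^ (n - p + 1)) x = 0 := by
  have hm (m : ℕ) (hm : n - p + 1 ≤ m) : (m : ℝ) ≠ n - p := by
    rw [← Nat.cast_sub hp]
    exact_mod_cast (by omega : m ≠ n - p)
  refine Nat.decreasingInduction (motive := fun m _ => n - p + 1 ≤ m → (lefschetz n ^ m) x = 0)
    (fun m _ ih hle => lefschetz_pow_eq_zero_of_succ hx hprim (hm m hle) (ih (by omega)))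
    (fun _ => eq_zero_of_isForm_of_lt (isForm_lefschetz_pow hx _) (by omega))
    (by omega : n - p + 1 ≤ n + 1) le_rfl

lemma eq_zero_of_lefschetz_pow_eq_zero {p t : ℕ} {x : SForm n} (hx : IsForm p x)
    (hprim : dualLefschetz n x = 0) (ht : t + p ≤ n) (h : (lefschetz n ^ t) x = 0) : x = 0 := by
  induction t with
  | zero => simpa using h
  | succ t ih =>
    refine ih (by omega) (lefschetz_pow_eq_zero_of_succ hx hprim ?_ h)
    have : (t : ℝ) + 1 + p ≤ n := by exact_mod_cast ht
    intro h'
    linarith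

lemma sip_lefschetz_pow_eq_zero {q : ℕ} {u v : SForm n} (hu : dualLefschetz n u = 0)
    (hv : IsForm q v) (hvp : dualLefschetz n v = 0) {a b : ℕ} (hab : a ≠ b) :
    sip ((lefschetz n ^ a) u) ((lefschetz n ^ b) v) = 0 := by
  induction a generalizing b with
  | zero =>
    obtain ⟨b, rfl⟩ := Nat.exists_eq_succ_of_ne_zero hab.symm
    rw [sip_eq_dotProduct, dotProduct_comm, ← sip_eq_dotProduct, pow_succ', Module.End.mul_apply,
      sip_lefschetz, pow_zero, Module.End.one_apply, hu, sip_eq_dotProduct, dotProduct_zero]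
  | succ a ih =>
    rw [pow_succ', Module.End.mul_apply, sip_lefschetz]
    cases b with
    | zero => rw [pow_zero, Module.End.one_apply, hvp, sip_eq_dotProduct, dotProduct_zero]
    | succ b =>
      rw [dualLefschetz_lefschetz_pow_succ hv hvp, sip_eq_dotProduct, dotProduct_smul,
        ← sip_eq_dotProduct, ih (by omega), smul_zero]

lemma exists_mem_forall_sip_sub_eq_zero (K : Submodule ℝ (SForm n)) (x : SForm n) :
    ∃ w ∈ K, ∀ u ∈ K, sip u (x - w) = 0 := by
  -- `SForm n` carries the sup norm; its Euclidean copy carries `sip` as inner product.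
  let e : EuclideanSpace ℝ (Finset (Fin (2 * n))) ≃ₗ[ℝ] SForm n := WithLp.linearEquiv 2 ℝ _
  obtain ⟨w, hw, z, hz, hxz⟩ :=
    (K.comap e.toLinearMap).exists_add_mem_mem_orthogonal (e.symm x)
  refine ⟨e w, hw, fun u hu => ?_⟩
  have hx : x - e w = e z := by rw [← e.apply_symm_apply x, hxz, map_add, add_sub_cancel_left]
  have h := (Submodule.mem_orthogonal _ _).1 hz (e.symm u) (by simpa using hu)
  rw [hx]
  rwa [EuclideanSpace.inner_eq_star_dotProduct, star_trivial, dotProduct_comm] at h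

lemma exists_primitive_add_lefschetz {k : ℕ} {x : SForm n} (hx : IsForm (k + 2) x) :
    ∃ z y, IsForm (k + 2) z ∧ dualLefschetz n z = 0 ∧ IsForm k y ∧ x = z + lefschetz n y := by
  obtain ⟨_, ⟨y, hy, rfl⟩, horth⟩ :=
    exists_mem_forall_sip_sub_eq_zero ((forms n k).map (lefschetz n)) x
  have hz : IsForm (k + 2) (x - lefschetz n y) :=
    (forms n (k + 2)).sub_mem hx (isForm_lefschetz hy)
  refine ⟨x - lefschetz n y, y, hz, ?_, hy, (sub_add_cancel _ _).symm⟩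
  rw [← dotProduct_self_eq_zero, ← sip_eq_dotProduct, ← sip_lefschetz]
  exact horth _ ⟨_, isForm_dualLefschetz hz, rfl⟩

theorem exists_lefschetz_decomposition {k : ℕ} {x : SForm n} (hx : IsForm k x) :
    ∃ c : ℕ → SForm n, (∀ j, dualLefschetz n (c j) = 0 ∧ IsForm (k - 2 * j) (c j)) ∧
      (∀ j, k < 2 * j → c j = 0) ∧
      ∀ N, k < 2 * N → x = ∑ j ∈ range N, (lefschetz n ^ j) (c j) := by
  induction k using Nat.strong_induction_on generalizing x with | _ k ih => ?_
  rcases lt_or_ge k 2 with hk | hk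
  · refine ⟨Pi.single 0 x, fun j => ?_, fun j hj => Pi.single_eq_of_ne (by omega) _,
      fun N hN => ?_⟩
    · rcases eq_or_ne j 0 with rfl | hj
      · simpa using ⟨dualLefschetz_eq_zero_of_lt_two hx hk, hx⟩
      · rw [Pi.single_eq_of_ne hj]
        exact ⟨map_zero _, (forms n _).zero_mem⟩
    · rw [sum_eq_single_of_mem 0 (by simp; omega) fun j _ hj => by simp [hj]]
      simp
  · obtain ⟨k, rfl⟩ : ∃ m, k = m + 2 := ⟨k - 2, by omega⟩
    obtain ⟨z, y, hz, hzp, hy, rfl⟩ := exists_primitive_add_lefschetz hx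
    obtain ⟨c, hc, hc_high, hy_eq⟩ := ih k (by omega) hy
    refine ⟨fun | 0 => z | j + 1 => c j, ?_, ?_, fun N hN => ?_⟩
    · rintro (_ | j)
      · exact ⟨hzp, hz⟩
      · simpa [show k + 2 - 2 * (j + 1) = k - 2 * j by omega] using hc j
    · rintro (_ | j) hj
      · omega
      · exact hc_high j (by omega)
    · obtain ⟨N, rfl⟩ : ∃ M, N = M + 1 := ⟨N - 1, by omega⟩
      rw [sum_range_succ', hy_eq N (by omega), map_sum]
      simp only [← Module.End.mul_apply, ← pow_succ', pow_zero, Module.End.one_apply,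
        add_comm]

lemma eq_zero_of_sum_eq_zero_of_sip_eq_zero {ι : Type*} {t : Finset ι} {v : ι → SForm n}
    (horth : ∀ i ∈ t, ∀ j ∈ t, i ≠ j → sip (v i) (v j) = 0) (hsum : ∑ i ∈ t, v i = 0)
    {i : ι} (hi : i ∈ t) : v i = 0 := by
  have h := congrArg (sip (v i)) hsum
  rwa [sip_eq_dotProduct, sip_eq_dotProduct, dotProduct_sum, dotProduct_zero,
    sum_eq_single_of_mem (f := fun j => v i ⬝ᵥ v j) i hi fun j hj hji =>
      horth i hi j hj hji.symm,
    dotProduct_self_eq_zero] at h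

lemma lefschetz_pow_add_eq_zero_of_sum {c : ℕ → SForm n} {d : ℕ → ℕ}
    (hc : ∀ j, dualLefschetz n (c j) = 0 ∧ IsForm (d j) (c j)) {a N : ℕ}
    (h : (lefschetz n ^ a) (∑ j ∈ range N, (lefschetz n ^ j) (c j)) = 0)
    {j : ℕ} (hj : j < N) :
    (lefschetz n ^ (a + j)) (c j) = 0 := by
  rw [map_sum] at h
  simp only [← Module.End.mul_apply, ← pow_add] at h
  exact eq_zero_of_sum_eq_zero_of_sip_eq_zero (fun i _ j _ hij =>
    sip_lefschetz_pow_eq_zero (hc i).1 (hc j).2 (hc j).1 (by omega)) h (mem_range.2 hj)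

theorem exists_primitive_decomposition_of_lefschetz_pow_eq_zero {k s : ℕ} {x : SForm n}
    (hk : k ≤ n) (hx : IsForm k x) (hvan : (lefschetz n ^ (n - k + s)) x = 0) :
    ∃ c : ℕ → SForm n,
      (∀ j < s,
        dualLefschetz n (c j) = 0 ∧ IsForm (k - 2 * j) (c j) ∧ (2 * j ≤ k ∨ c j = 0)) ∧
      x = ∑ j ∈ range s, (lefschetz n ^ j) (c j) := by
  obtain ⟨c, hc, hc_high, hx_eq⟩ := exists_lefschetz_decomposition hx
  rw [hx_eq (s + k + 1) (by omega)] at hvan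
  have hc_zero (j : ℕ) (hj : s ≤ j) : c j = 0 := by
    rcases lt_or_ge k (2 * j) with h | h
    · exact hc_high j h
    · exact eq_zero_of_lefschetz_pow_eq_zero (hc j).2 (hc j).1 (by omega)
        (lefschetz_pow_add_eq_zero_of_sum hc hvan (by omega))
  refine ⟨c, fun j _ => ⟨(hc j).1, (hc j).2, (le_or_gt (2 * j) k).imp_right (hc_high j)⟩,
    ?_⟩
  rw [hx_eq (s + k + 1) (by omega)]
  refine (sum_subset (range_subset_range.2 (by omega)) fun j _ hj => ?_).symm
  rw [hc_zero j (by simpa using hj), map_zero]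

end SForm

open SForm

theorem primitivity_criterion_general (n : ℕ)
    (Lam : SForm n → SForm n)
    (hLam : ∀ x y : SForm n, sip (Lop n x) y = sip x (Lam y))
    (k : ℕ) (hk : k ≤ n) (x : SForm n) (hx : IsForm k x) :
    (∀ s : ℕ, 1 ≤ s → Lpow n (n - k + s) x = 0 →
      ∃ c : ℕ → SForm n,
        (∀ j < s, Lam (c j) = 0 ∧ IsForm (k - 2 * j) (c j) ∧ (2 * j ≤ k ∨ c j = 0)) ∧
        x = ∑ j ∈ Finset.range s, Lpow n j (c j)) ∧
    (Lam x = 0 ↔ Lpow n (n - k + 1) x = 0) := by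
  obtain rfl := eq_dualLefschetz hLam
  simp only [Lpow_eq_lefschetz_pow]
  refine ⟨fun s _ hvan => exists_primitive_decomposition_of_lefschetz_pow_eq_zero hk hx hvan,
    fun hprim => lefschetz_pow_sub_add_one_eq_zero hx hprim hk, fun hvan => ?_⟩
  obtain ⟨c, hc, rfl⟩ := exists_primitive_decomposition_of_lefschetz_pow_eq_zero hk hx hvan
  simpa using (hc 0 one_pos).1

/-- for a `k`-form `x` with `k ≤ n`:
(i) if `L^{n−k+s} x = 0` for some `s ≥ 1`, then `x = Σ_{0 ≤ j ≤ s−1} L^j x_j` with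
each `x_j` a primitive `(k−2j)`-form (so `x_j = 0` whenever `2j > k`);
(ii) `x` is primitive (`Λx = 0`) iff `L^{n−k+1} x = 0`. -/
theorem primitivity_criterion (n : ℕ) (hn : 1 ≤ n)
    (Lam : SForm n → SForm n)
    (hLam : ∀ x y : SForm n, sip (Lop n x) y = sip x (Lam y))
    (k : ℕ) (hk : k ≤ n) (x : SForm n) (hx : IsForm k x) :
    (∀ s : ℕ, 1 ≤ s → Lpow n (n - k + s) x = 0 →
      ∃ c : ℕ → SForm n,
        (∀ j < s, Lam (c j) = 0 ∧ IsForm (k - 2 * j) (c j) ∧ (2 * j ≤ k ∨ c j = 0)) ∧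
        x = ∑ j ∈ Finset.range s, Lpow n j (c j)) ∧
    (Lam x = 0 ↔ Lpow n (n - k + 1) x = 0) :=
  primitivity_criterion_general n Lam hLam k hk x hx
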